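/- arXiv:2103.02918 — 3 statements merged into one kernel-verified Lean document; each statement's English description precedes it below -/
import Mathlib

section
/- Let A be a Noetherian flat K[t]-algebra and M, N finitely generated A-modules flat over K[t]. If Ext^i_A(M, N) is flat over K[t] for all i ≤ h, then for every m ≥ 1 and every i ≤ h−1 there is an isomorphism Ext^i_A(M, N/t^mN) ≅ Ext^i_A(M, N)/t^m Ext^i_A(M, N), and this module is flat over K[t]/(t^m). -/
noncomputable section
open CategoryTheory Polynomial

variable (K A : Type) [Field K] [CommRing A] [Algebra (Polynomial K) A]

/-- The image of the variable `t` in `A`. -/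
def tA : A := algebraMap (Polynomial K) A Polynomial.X

variable (M : Type) [AddCommGroup M] [Module A M]

/-- The submodule `t^k M` of `M`. -/
def tsub (k : ℕ) : Submodule A M := LinearMap.range (LinearMap.lsmul A M ((tA K A)^k))

variable {M}

/-- The natural projection `M/t^lM → M/t^kM` for `k ≤ l`. -/
def projMap {k l : ℕ} (h : k ≤ l) : (M ⧸ tsub K A M l) →ₗ[A] M ⧸ tsub K A M k :=
  Submodule.mapQ _ _ LinearMap.id (by
    rintro x ⟨y, rfl⟩
    refine ⟨(tA K A)^(l-k) • y, ?_⟩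
    simp only [LinearMap.lsmul_apply, LinearMap.id_coe, id_eq, smul_smul, ← pow_add]
    rw [Nat.add_sub_cancel' h])

/-- The map `M/t^kM → M/t^lM` given by multiplication by `t^{l-k}`, for `k ≤ l`. -/
def mulMap {k l : ℕ} (h : k ≤ l) : (M ⧸ tsub K A M k) →ₗ[A] M ⧸ tsub K A M l :=
  Submodule.mapQ _ _ (LinearMap.lsmul A M ((tA K A)^(l-k))) (by
    rintro x ⟨y, rfl⟩
    refine ⟨y, ?_⟩
    simp only [LinearMap.lsmul_apply, smul_smul, ← pow_add]
    rw [Nat.sub_add_cancel h])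

/-- `M/t^kM` as an object of the category of `A`-modules. -/
abbrev Qu (k : ℕ) : ModuleCat.{0} A := ModuleCat.of A (M ⧸ tsub K A M k)

variable (N : Type) [AddCommGroup N] [Module A N]

/-- The map `Ext^i_A(M/t^kM, N) → Ext^i_A(M/t^lM, N)` induced by the natural
projection `M/t^lM → M/t^kM`. -/
def extProj (i k l : ℕ) (h : k ≤ l) :
    ((Ext A (ModuleCat.{0} A) i).obj (Opposite.op (Qu K A (M := M) k))).obj (ModuleCat.of A N) ⟶
    ((Ext A (ModuleCat.{0} A) i).obj (Opposite.op (Qu K A (M := M) l))).obj (ModuleCat.of A N) :=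
  ((Ext A (ModuleCat.{0} A) i).map (ModuleCat.ofHom (projMap K A h)).op).app (ModuleCat.of A N)

/-- The map `Ext^i_A(M/t^lM, N) → Ext^i_A(M/t^kM, N)` induced by
multiplication `t^{l-k} : M/t^kM → M/t^lM`. -/
def extMul (i k l : ℕ) (h : k ≤ l) :
    ((Ext A (ModuleCat.{0} A) i).obj (Opposite.op (Qu K A (M := M) l))).obj (ModuleCat.of A N) ⟶
    ((Ext A (ModuleCat.{0} A) i).obj (Opposite.op (Qu K A (M := M) k))).obj (ModuleCat.of A N) :=
  ((Ext A (ModuleCat.{0} A) i).map (ModuleCat.ofHom (mulMap K A h)).op).app (ModuleCat.of A N)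

/-- `M` is `N`-fiber-full up to `h`: for every `m ≥ 1`, the natural projection
`M/t^mM → M/tM` induces injective maps `Ext^i_A(M/tM, N) → Ext^i_A(M/t^mM, N)`
for all `i ≤ h`. -/
def NFiberFull (h : ℤ) : Prop :=
  ∀ m : ℕ, ∀ _hm : 0 < m, ∀ i : ℕ, (i : ℤ) ≤ h →
    Function.Injective (extProj K A (M := M) N i 1 m (by omega))

/-- The quotient ring `A/(t^m)`. -/
abbrev Am (m : ℕ) : Type := A ⧸ Ideal.span {(tA K A)^m}

/-- The quotient ring `K[t]/(t^m)`. -/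
abbrev Ktm (m : ℕ) : Type := Polynomial K ⧸ Ideal.span {(X : Polynomial K)^m}

/-- The induced ring map `K[t]/(t^m) → A/(t^m)`. -/
def KtmToAm (m : ℕ) : Ktm K m →+* Am K A m :=
  Ideal.quotientMap (Ideal.span {(tA K A)^m}) (algebraMap (Polynomial K) A) (by
    rw [Ideal.span_le, Set.singleton_subset_iff]
    simp only [SetLike.mem_coe, Ideal.mem_comap, map_pow]
    exact Ideal.subset_span rfl)

/-- `P/t^kP` is killed by `t^m` whenever `k ≤ m`. -/
lemma tsub_quot_torsion_le (P : Type) [AddCommGroup P] [Module A P] (k m : ℕ) (hkm : k ≤ m) :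
    Module.IsTorsionBySet A (P ⧸ tsub K A P k) (Ideal.span {(tA K A)^m} : Ideal A) := by
  rw [← Module.isTorsionBySet_iff_is_torsion_by_span,
    Module.isTorsionBySet_singleton_iff]
  intro x
  obtain ⟨y, rfl⟩ := Submodule.Quotient.mk_surjective _ x
  rw [← Submodule.Quotient.mk_smul, Submodule.Quotient.mk_eq_zero]
  refine ⟨(tA K A)^(m-k) • y, ?_⟩
  simp only [LinearMap.lsmul_apply, smul_smul, ← pow_add]
  rw [Nat.add_sub_cancel' hkm]

/-- The `A/(t^m)`-module structure on `P/t^mP`. -/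
noncomputable instance quotAmModule (P : Type) [AddCommGroup P] [Module A P] (m : ℕ) :
    Module (Am K A m) (P ⧸ tsub K A P m) :=
  (tsub_quot_torsion_le K A P m m le_rfl).module

/-- A module over `A/(t^m)` is flat over `K[t]/(t^m)` (via the induced map
`K[t]/(t^m) → A/(t^m)`). -/
def FlatOverKtm (m : ℕ) (P : Type) [AddCommGroup P] [Module (Am K A m) P] : Prop :=
  letI : Module (Ktm K m) P := Module.compHom P (KtmToAm K A m)
  Module.Flat (Ktm K m) P

/-!
Resolve `M` by projectives `P`. As `t^m` is regular on `N`, the sequence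
`0 → N →(t^m) N → N/t^mN → 0` is exact and stays exact after applying `Hom(P, -)`. In the
resulting long exact sequence
`Ext^i(M,N) →(t^m) Ext^i(M,N) → Ext^i(M,N/t^mN) →(δ) Ext^(i+1)(M,N) →(t^m) Ext^(i+1)(M,N)`
the last map is injective because `Ext^(i+1)(M,N)` is `K[t]`-flat, hence torsion free; so `δ = 0`
and `Ext^i(M,N/t^mN) ≅ Ext^i(M,N)/t^m`. Flatness over `K[t]/(t^m)` is then base change:
`E/t^mE ≅ K[t]/(t^m) ⊗[K[t]] E`.
-/

open Opposite

section HomComplex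

variable {R : Type*} [CommRing R] {C : Type*} [Category C] [Abelian C] [Linear R C]

lemma CategoryTheory.ShortComplex.ShortExact.map_linearCoyoneda_obj {S : ShortComplex C}
    (hS : S.ShortExact) (P : C) [Projective P] :
    (S.map ((linearCoyoneda R C).obj (Opposite.op P))).ShortExact := by
  have := hS.mono_f
  have := hS.epi_g
  refine ShortComplex.ShortExact.mk' ?exact ?mono ?epi
  case exact =>
    rw [ShortComplex.moduleCat_exact_iff]
    intro (u : P ⟶ S.X₂) (hu : u ≫ S.g = 0)
    exact ⟨hS.exact.lift u hu, hS.exact.lift_f u hu⟩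
  case mono =>
    rw [ModuleCat.mono_iff_injective]
    intro (u : P ⟶ S.X₁) (v : P ⟶ S.X₁) (huv : u ≫ S.f = v ≫ S.f)
    exact (cancel_mono S.f).1 huv
  case epi =>
    rw [ModuleCat.epi_iff_surjective]
    intro (w : P ⟶ S.X₃)
    exact ⟨Projective.factorThru w S.g, Projective.factorThru_comp w S.g⟩

def ChainComplex.linearYonedaFunctor (P : ChainComplex C ℕ) :
    C ⥤ CochainComplex (ModuleCat R) ℕ where
  obj Y := P.linearYonedaObj R Y
  map φ :=
    { f := fun n => ((linearCoyoneda R C).obj (op (P.X n))).map φ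
      comm' := fun n n' _ => by
        ext (u : P.X n ⟶ _)
        exact (Category.assoc _ _ _).symm }
  map_id Y := by
    ext n (u : P.X n ⟶ Y)
    exact Category.comp_id u
  map_comp φ ψ := by
    ext n (u : P.X n ⟶ _)
    exact (Category.assoc u φ ψ).symm

instance (P : ChainComplex C ℕ) : (P.linearYonedaFunctor (R := R)).Additive where
  map_add {_ _ φ ψ} := by
    ext n (u : P.X n ⟶ _)
    exact Preadditive.comp_add _ _ _ u φ ψ

instance (P : ChainComplex C ℕ) : (P.linearYonedaFunctor (R := R)).Linear R where
  map_smul {_ _} φ r := by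
    ext n (u : P.X n ⟶ _)
    exact Linear.comp_smul _ _ _ u r φ

lemma ChainComplex.shortExact_map_linearYonedaFunctor (P : ChainComplex C ℕ)
    [∀ n, Projective (P.X n)] {S : ShortComplex C} (hS : S.ShortExact) :
    (S.map (P.linearYonedaFunctor (R := R))).ShortExact := by
  rw [HomologicalComplex.shortExact_iff_degreewise_shortExact]
  exact fun n => hS.map_linearCoyoneda_obj (R := R) (P.X n)

end HomComplex

section Homology

variable {ι : Type*} {c : ComplexShape ι}

lemma HomologicalComplex.homologyMap_smul {R C : Type*} [Semiring R] [Category C] [Preadditive C]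
    [Linear R C] {K L : HomologicalComplex C c} (φ : K ⟶ L) (r : R) (i : ι)
    [K.HasHomology i] [L.HasHomology i] :
    homologyMap (r • φ) i = r • homologyMap φ i :=
  ShortComplex.homologyMap_smul ((shortComplexFunctor C c i).map φ) r

variable {R : Type*} [CommRing R]

theorem HomologicalComplex.nonempty_homology_linearEquiv_quotient_smul
    {K L : HomologicalComplex (ModuleCat R) c} {f : K ⟶ K} {g : K ⟶ L} {w : f ≫ g = 0}
    (hS : (ShortComplex.mk f g w).ShortExact) {r : R} (hf : f = r • 𝟙 K) {i j : ι}
    (hij : c.Rel i j) (hreg : IsSMulRegular (K.homology j) r) :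
    Nonempty (L.homology i ≃ₗ[R]
      K.homology i ⧸ LinearMap.range (LinearMap.lsmul R (K.homology i) r)) := by
  subst hf
  have hr (k : ι) : homologyMap (r • 𝟙 K) k = r • 𝟙 (K.homology k) := by
    rw [homologyMap_smul, homologyMap_id]
  have hδ : hS.δ i j hij = 0 := by
    ext x
    apply hreg
    have h := congr($(hS.δ_comp i j hij).hom x)
    simpa only [hr, ModuleCat.hom_comp, ModuleCat.hom_smul, ModuleCat.hom_id, LinearMap.comp_apply,
      LinearMap.smul_apply, LinearMap.id_apply, ModuleCat.hom_zero, LinearMap.zero_apply,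
      smul_zero] using h
  have hsurj : Function.Surjective (homologyMap g i) :=
    (ModuleCat.epi_iff_surjective _).1 ((hS.homology_exact₃ i j hij).epi_f hδ)
  have hker : LinearMap.range (LinearMap.lsmul R (K.homology i) r) =
      LinearMap.ker (homologyMap g i).hom := by
    rw [← (hS.homology_exact₂ i).moduleCat_range_eq_ker]
    simp only [hr]
    rfl
  exact ⟨((homologyMap g i).hom.quotKerEquivOfSurjective hsurj).symm.trans
    (Submodule.quotEquivOfEq _ _ hker.symm)⟩

end Homology

section Ext

variable {R : Type} [CommRing R]

lemma LinearEquiv.map_range_lsmul {P Q : Type*} [AddCommGroup P] [Module R P] [AddCommGroup Q]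
    [Module R Q] (e : P ≃ₗ[R] Q) (r : R) :
    (LinearMap.range (LinearMap.lsmul R P r)).map (e : P →ₗ[R] Q) =
      LinearMap.range (LinearMap.lsmul R Q r) := by
  have hcomm : (e : P →ₗ[R] Q) ∘ₗ LinearMap.lsmul R P r = LinearMap.lsmul R Q r ∘ₗ e :=
    LinearMap.ext fun x => map_smul e r x
  rw [← LinearMap.range_comp, hcomm, LinearMap.range_comp_of_range_eq_top _ e.range]

variable (V : Type) [AddCommGroup V] [Module R V]

lemma ModuleCat.smul_id_comp_mkQ_range_lsmul (r : R) :
    (r • 𝟙 (ModuleCat.of R V)) ≫ ModuleCat.ofHom (LinearMap.range (LinearMap.lsmul R V r)).mkQ =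
      0 := by
  ext x
  exact (Submodule.Quotient.mk_eq_zero _).2 ⟨x, rfl⟩

lemma ModuleCat.shortExact_smul_mkQ {r : R} (hr : IsSMulRegular V r) :
    (ShortComplex.mk (r • 𝟙 (ModuleCat.of R V))
      (ModuleCat.ofHom (LinearMap.range (LinearMap.lsmul R V r)).mkQ)
      (smul_id_comp_mkQ_range_lsmul V r)).ShortExact := by
  refine ShortComplex.ShortExact.mk' ?exact ?mono ?epi
  case exact =>
    rw [ShortComplex.moduleCat_exact_iff]
    exact fun x hx => (Submodule.Quotient.mk_eq_zero _).1 hx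
  case mono => exact (ModuleCat.mono_iff_injective _).2 hr
  case epi => exact (ModuleCat.epi_iff_surjective _).2 (Submodule.mkQ_surjective _)

theorem nonempty_ext_quotient_smul_linearEquiv (U : ModuleCat.{0} R) {r : R}
    (hV : IsSMulRegular V r) (i : ℕ)
    (hExt : IsSMulRegular (((Ext R (ModuleCat.{0} R) (i + 1)).obj (op U)).obj
      (ModuleCat.of R V)) r) :
    Nonempty (((Ext R (ModuleCat.{0} R) i).obj (op U)).obj
        (ModuleCat.of R (V ⧸ LinearMap.range (LinearMap.lsmul R V r))) ≃ₗ[R]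
      (((Ext R (ModuleCat.{0} R) i).obj (op U)).obj (ModuleCat.of R V)) ⧸
        LinearMap.range (LinearMap.lsmul R
          (((Ext R (ModuleCat.{0} R) i).obj (op U)).obj (ModuleCat.of R V)) r)) := by
  obtain ⟨P⟩ : Nonempty (ProjectiveResolution U) := HasProjectiveResolution.out
  let extIso (k : ℕ) (Y : ModuleCat.{0} R) := (P.isoExt (R := R) k Y).toLinearEquiv
  have hS := P.complex.shortExact_map_linearYonedaFunctor (R := R)
    (ModuleCat.shortExact_smul_mkQ V hV)
  obtain ⟨e⟩ := HomologicalComplex.nonempty_homology_linearEquiv_quotient_smul hS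
    (by rw [Functor.map_smul, CategoryTheory.Functor.map_id]) (i := i) (j := i + 1) rfl
    (hExt.of_injective (extIso (i + 1) _).symm (extIso (i + 1) _).symm.injective)
  exact ⟨(extIso i _).trans (e.trans (Submodule.Quotient.equiv _ _ (extIso i _).symm
    ((extIso i _).symm.map_range_lsmul r)))⟩

end Ext

section FlatQuotient

open scoped TensorProduct

variable {R S E : Type*} [CommRing R] [CommRing S] [Algebra R S] [AddCommGroup E] [Module S E]
  [Module R E] [IsScalarTower R S E] [Module.Flat R E]

theorem Module.Flat.quotient_of_restrictScalars_eq {I : Ideal R} {p : Submodule S E}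
    (hp : I • ⊤ = p.restrictScalars R) [Module (R ⧸ I) (E ⧸ p)]
    (hsmul : ∀ (t : R) (x : E), Ideal.Quotient.mk I t • Submodule.Quotient.mk (p := p) x =
      Submodule.Quotient.mk (t • x)) :
    Module.Flat (R ⧸ I) (E ⧸ p) := by
  have : IsScalarTower R (R ⧸ I) (E ⧸ p) := by
    refine IsScalarTower.of_algebraMap_smul fun t q => ?_
    obtain ⟨x, rfl⟩ := Submodule.Quotient.mk_surjective _ q
    exact hsmul t x
  let e := (TensorProduct.quotTensorEquivQuotSMul E I).trans
    ((Submodule.quotEquivOfEq _ _ hp).trans (Submodule.Quotient.restrictScalarsEquiv R p))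
  exact Module.Flat.of_linearEquiv (e.extendScalarsOfSurjective Ideal.Quotient.mk_surjective).symm

end FlatQuotient

section PowersOfT

variable {K A} {E : Type} [AddCommGroup E] [Module A E]

lemma isSMulRegular_tA_pow [Module (Polynomial K) E] [IsScalarTower (Polynomial K) A E]
    [Module.Flat (Polynomial K) E] (m : ℕ) : IsSMulRegular E (tA K A ^ m) := by
  rw [tA, ← map_pow, isSMulRegular_algebraMap_iff]
  exact Module.Flat.isSMulRegular_of_isRegular (IsRegular.of_ne_zero (pow_ne_zero m X_ne_zero))

section RestrictScalars

variable [Module.Flat (Polynomial K) (RestrictScalars (Polynomial K) A E)]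

lemma isSMulRegular_tA_pow_of_flat_restrictScalars (m : ℕ) : IsSMulRegular E (tA K A ^ m) := by
  let _ := Module.compHom E (algebraMap (Polynomial K) A)
  have : IsScalarTower (Polynomial K) A E := IsScalarTower.of_compHom _ _ _
  have : Module.Flat (Polynomial K) E := ‹Module.Flat _ (RestrictScalars (Polynomial K) A E)›
  exact isSMulRegular_tA_pow m

lemma flatOverKtm_quotient_of_flat_restrictScalars (m : ℕ) :
    FlatOverKtm K A m (E ⧸ tsub K A E m) := by
  let _ := Module.compHom E (algebraMap (Polynomial K) A)
  have : IsScalarTower (Polynomial K) A E := IsScalarTower.of_compHom _ _ _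
  have : Module.Flat (Polynomial K) E := ‹Module.Flat _ (RestrictScalars (Polynomial K) A E)›
  let _ : Module (Ktm K m) (E ⧸ tsub K A E m) := Module.compHom _ (KtmToAm K A m)
  refine Module.Flat.quotient_of_restrictScalars_eq ?_ fun t x => ?_
  · ext x
    simp only [Submodule.ideal_span_singleton_smul, Submodule.mem_smul_pointwise_iff_exists,
      Submodule.mem_top, true_and, tsub, tA, Submodule.restrictScalars_mem, LinearMap.mem_range,
      LinearMap.lsmul_apply, ← map_pow, algebraMap_smul]
  · change KtmToAm K A m (Ideal.Quotient.mk _ t) • (Submodule.Quotient.mk x : E ⧸ tsub K A E m) =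
      Submodule.Quotient.mk (algebraMap _ A t • x)
    rw [KtmToAm, Ideal.quotientMap_mk, Module.IsTorsionBySet.mk_smul]
    rfl

end RestrictScalars

end PowersOfT

theorem ext_mod_tm_iso_and_flat
    [Module (Polynomial K) N] [IsScalarTower (Polynomial K) A N]
    [Module.Flat (Polynomial K) N]
    (h : ℤ)
    (hflat : ∀ i : ℕ, (i : ℤ) ≤ h →
      Module.Flat (Polynomial K) (RestrictScalars (Polynomial K) A
        (((Ext A (ModuleCat.{0} A) i).obj
            (Opposite.op (ModuleCat.of A M))).obj (ModuleCat.of A N)))) :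
    ∀ m : ℕ, 0 < m → ∀ i : ℕ, (i : ℤ) ≤ h - 1 →
      Nonempty
        ((((Ext A (ModuleCat.{0} A) i).obj
            (Opposite.op (ModuleCat.of A M))).obj (ModuleCat.of A (N ⧸ tsub K A N m))) ≃ₗ[A]
          ((((Ext A (ModuleCat.{0} A) i).obj
              (Opposite.op (ModuleCat.of A M))).obj (ModuleCat.of A N)) ⧸
            tsub K A (((Ext A (ModuleCat.{0} A) i).obj
              (Opposite.op (ModuleCat.of A M))).obj (ModuleCat.of A N)) m)) ∧
      FlatOverKtm K A m
        ((((Ext A (ModuleCat.{0} A) i).obj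
            (Opposite.op (ModuleCat.of A M))).obj (ModuleCat.of A N)) ⧸
          tsub K A (((Ext A (ModuleCat.{0} A) i).obj
            (Opposite.op (ModuleCat.of A M))).obj (ModuleCat.of A N)) m) := by
  intro m _ i hi
  have := hflat i (by omega)
  have := hflat (i + 1) (by push_cast; omega)
  exact ⟨nonempty_ext_quotient_smul_linearEquiv N (ModuleCat.of A M) (isSMulRegular_tA_pow m) i
      (isSMulRegular_tA_pow_of_flat_restrictScalars m),
    flatOverKtm_quotient_of_flat_restrictScalars m⟩
end
end

section
/- Let A be a Noetherian commutative ring of dimension d, I ⊆ A an ideal, t ∈ A, m ≥ 1, and h an integer. Define (I,t^m)^{≤h} = {g ∈ A : ht((I,t^m) : g) > h}. Then (I,t^m)^{≤h} ⊆ (I,t)^{≤h}, and √((I,t^m)^{≤h}) = √((I,t)^{≤h}). -/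
noncomputable section

variable (R : Type) [CommRing R]

/-- The height of an ideal: the infimum of the heights of the primes containing it. -/
def idealHeight (J : Ideal R) : ℕ∞ :=
  ⨅ (P : PrimeSpectrum R) (_ : J ≤ P.asIdeal), Order.height P

/-- `ht J > h`, where `h` is an integer. -/
def htGT (J : Ideal R) (h : ℤ) : Prop :=
  h < 0 ∨ (h.toNat : ℕ∞) < idealHeight R J

/-- The set underlying `J^{≤ h}`: the elements `g` with `ht (J : g) > h`. -/
def leHSet (J : Ideal R) (h : ℤ) : Set R :=
  {g : R | htGT R (Submodule.colon (J : Submodule R R) (Ideal.span {g})) h}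

/-- The ideal `J^{≤ h}` obtained by removing the primary components of height `> h`:
`{g | ht (J : g) > h}`. -/
def leH (J : Ideal R) (h : ℤ) : Ideal R := Ideal.span (leHSet R J h)

lemma idealHeight_le_of_primes {J K : Ideal R}
    (hp : ∀ P : PrimeSpectrum R, K ≤ P.asIdeal → J ≤ P.asIdeal) :
    idealHeight R J ≤ idealHeight R K :=
  le_iInf₂ fun P hP => iInf₂_le P (hp P hP)

lemma htGT_of_primes {J K : Ideal R} {h : ℤ}
    (hp : ∀ P : PrimeSpectrum R, K ≤ P.asIdeal → J ≤ P.asIdeal)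
    (hJ : htGT R J h) : htGT R K h := by
  rcases hJ with h0 | hlt
  · exact Or.inl h0
  · exact Or.inr (lt_of_lt_of_le hlt (idealHeight_le_of_primes R hp))

lemma pow_mem_sup_pow {I : Ideal R} {t y : R} (m : ℕ)
    (hy : y ∈ I ⊔ Ideal.span {t}) : y ^ m ∈ I ⊔ Ideal.span {t ^ m} := by
  obtain ⟨a, ha, b, hb, rfl⟩ := Submodule.mem_sup.mp hy
  obtain ⟨c, rfl⟩ := Ideal.mem_span_singleton.mp hb
  obtain ⟨e, he⟩ := sub_dvd_pow_sub_pow (a + c * t) (c * t) m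
  have hsub : (a + c * t) - c * t = a := by ring
  refine Submodule.mem_sup.mpr ⟨((a + c * t) ^ m - (c * t) ^ m), ?_, (c * t) ^ m, ?_, by ring⟩
  · rw [he, hsub]; exact Ideal.mul_mem_right _ _ ha
  · exact Ideal.mem_span_singleton.mpr ⟨c ^ m, by ring⟩

/-- For a Noetherian ring `R` of dimension `d`, an ideal `I`, `t ∈ R`,
`m ≥ 1` and an integer `h`, with `(I,t^m)^{≤h} = {g | ht((I,t^m) : g) > h}`, one has
`(I,t^m)^{≤h} ⊆ (I,t)^{≤h}` and `√((I,t^m)^{≤h}) = √((I,t)^{≤h})`. -/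
theorem leH_subset_and_radical_eq
    [IsNoetherianRing R] (d : ℕ) (hd : ringKrullDim R = d)
    (I : Ideal R) (t : R) (m : ℕ) (hm : 1 ≤ m) (h : ℤ) :
    leHSet R (I ⊔ Ideal.span {t^m}) h ⊆ leHSet R (I ⊔ Ideal.span {t}) h ∧
    (leH R (I ⊔ Ideal.span {t^m}) h).radical = (leH R (I ⊔ Ideal.span {t}) h).radical := by
  have hle : I ⊔ Ideal.span {t ^ m} ≤ I ⊔ Ideal.span {t} := by
    refine sup_le le_sup_left ?_
    rw [Ideal.span_le, Set.singleton_subset_iff]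
    exact le_sup_right (α := Ideal R) (Ideal.mem_span_singleton.mpr (dvd_pow_self t (by omega)))
  have hsubset : leHSet R (I ⊔ Ideal.span {t^m}) h ⊆ leHSet R (I ⊔ Ideal.span {t}) h := by
    intro g hg
    refine htGT_of_primes R (fun P hP => le_trans ?_ hP) hg
    exact Submodule.colon_mono hle le_rfl
  refine ⟨hsubset, le_antisymm ?_ ?_⟩
  · exact Ideal.radical_mono (Ideal.span_mono hsubset)
  · have key : leH R (I ⊔ Ideal.span {t}) h ≤ (leH R (I ⊔ Ideal.span {t ^ m}) h).radical := by
      rw [leH, Ideal.span_le]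
      intro g hg
      rw [SetLike.mem_coe, Ideal.mem_radical_iff]
      refine ⟨m, ?_⟩
      have hgm : g ^ m ∈ leHSet R (I ⊔ Ideal.span {t ^ m}) h := by
        refine htGT_of_primes R (fun Q hQ x hx => ?_) hg
        have hx' : x * g ∈ I ⊔ Ideal.span {t} := Ideal.mem_colon_span_singleton.mp hx
        have hpow : x ^ m * g ^ m ∈ I ⊔ Ideal.span {t ^ m} := by
          have := pow_mem_sup_pow R m hx'
          rwa [mul_pow] at this
        have : x ^ m ∈ Q.asIdeal := hQ (Ideal.mem_colon_span_singleton.mpr hpow)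
        exact Q.isPrime.mem_of_pow_mem m this
      exact Ideal.subset_span hgm
    calc (leH R (I ⊔ Ideal.span {t}) h).radical
        ≤ (leH R (I ⊔ Ideal.span {t ^ m}) h).radical.radical := Ideal.radical_mono key
      _ = (leH R (I ⊔ Ideal.span {t ^ m}) h).radical := Ideal.radical_idem _
end
end

section
/- Let S be a commutative ring, t ∈ S, and E a finitely generated S-module which is also a module over S/(t^m) for some m ≥ 2 (i.e., t^mE = 0). Suppose (a) E/t^{m-1}E is flat over K[t]/(t^{m-1}) and (b) the annihilator of t^{m-1} in E equals tE, where E is a K[t]/(t^m)-module via a ring map K[t]/(t^m) → S/(t^m). Then E is flat over K[t]/(t^m). -/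
/-!
Over `K[t]/(t^m)` every ideal is `(t^k)` with annihilator `(t^(m-k))`, so by the ideal criterion
`E` is flat as soon as `ker (t^k) ⊆ t^(m-k) E` for all `k ≤ m`. Hypothesis (b) is the case
`k = m - 1`, and descending induction on `k` gives the others: if `t^k e = 0` then
`t^(k+1) e = 0`, so `e = t^(m-k-1) f` by induction; then `t^(m-1) f = t^k e = 0`, so `f ∈ t E`
by (b) and `e ∈ t^(m-k) E`.
-/

noncomputable section
open Polynomial

variable (K : Type) [Field K] (S : Type) [CommRing S] (t : S)
  (E : Type) [AddCommGroup E] [Module S E] [Module (Polynomial K) E]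

/-- The submodule `X^k E` of `E` (equal to `t^k E` under the compatibility below). -/
def XE (k : ℕ) : Submodule (Polynomial K) E :=
  LinearMap.range (LinearMap.lsmul (Polynomial K) E ((X : Polynomial K)^k))

lemma quot_tor (k : ℕ) :
    Module.IsTorsionBySet (Polynomial K) (E ⧸ XE K E k)
      (Ideal.span {(X : Polynomial K)^k} : Ideal (Polynomial K)) := by
  rw [← Module.isTorsionBySet_iff_is_torsion_by_span, Module.isTorsionBySet_singleton_iff]
  intro x
  obtain ⟨e, rfl⟩ := Submodule.Quotient.mk_surjective _ x
  rw [← Submodule.Quotient.mk_smul, Submodule.Quotient.mk_eq_zero]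
  exact ⟨e, rfl⟩

lemma full_tor (m : ℕ) (hcompat : ∀ e : E, (X : Polynomial K) • e = t • e)
    (htor : ∀ e : E, t^m • e = 0) :
    Module.IsTorsionBySet (Polynomial K) E
      (Ideal.span {(X : Polynomial K)^m} : Ideal (Polynomial K)) := by
  rw [← Module.isTorsionBySet_iff_is_torsion_by_span, Module.isTorsionBySet_singleton_iff]
  have key : ∀ n : ℕ, ∀ e : E, (X : Polynomial K)^n • e = t^n • e := by
    intro n
    induction n with
    | zero => simp
    | succ n ih =>
      intro e
      rw [pow_succ, pow_succ, mul_smul, mul_smul, hcompat, ih]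
  intro e
  rw [key]
  exact htor e

open scoped TensorProduct

section SpanSingleton

variable {R M : Type*} [CommRing R] [AddCommGroup M] [Module R M]

lemma Ideal.exists_tmul_eq_of_span_singleton (x : R) (z : Ideal.span {x} ⊗[R] M) :
    ∃ m : M, (⟨x, Ideal.mem_span_singleton_self x⟩ : Ideal.span {x}) ⊗ₜ m = z := by
  induction z using TensorProduct.induction_on with
  | zero => exact ⟨0, TensorProduct.tmul_zero _ _⟩
  | tmul i m =>
    obtain ⟨a, ha⟩ := Ideal.mem_span_singleton'.mp i.2
    refine ⟨a • m, ?_⟩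
    rw [← TensorProduct.smul_tmul]
    congr
    exact Subtype.ext (by simp [ha])
  | add z₁ z₂ h₁ h₂ =>
    obtain ⟨m₁, rfl⟩ := h₁
    obtain ⟨m₂, rfl⟩ := h₂
    exact ⟨m₁ + m₂, TensorProduct.tmul_add _ _ _⟩

lemma Ideal.rTensor_span_singleton_subtype_injective (x : R)
    (h : ∀ m : M, x • m = 0 → ∃ (w : R) (n : M), w * x = 0 ∧ w • n = m) :
    Function.Injective ((Ideal.span {x}).subtype.rTensor M) := by
  rw [injective_iff_map_eq_zero]
  intro z hz
  obtain ⟨m, rfl⟩ := Ideal.exists_tmul_eq_of_span_singleton x z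
  have hxm : x • m = 0 := by
    simpa using congrArg (TensorProduct.lid R M) hz
  obtain ⟨w, n, hw, rfl⟩ := h m hxm
  have hwx : w • (⟨x, Ideal.mem_span_singleton_self x⟩ : Ideal.span {x}) = 0 :=
    Subtype.ext (by simpa using hw)
  rw [← TensorProduct.smul_tmul, hwx, TensorProduct.zero_tmul]

end SpanSingleton

section PrimePowerQuotient

variable {R : Type*} [CommRing R] [IsDomain R] [IsPrincipalIdealRing R] {p : R}

lemma Ideal.exists_eq_span_pow_of_quotient_span_pow (hp : Prime p) (n : ℕ)
    (I : Ideal (R ⧸ Ideal.span {p ^ n})) :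
    ∃ k ≤ n, I = Ideal.span {Ideal.Quotient.mk _ (p ^ k)} := by
  obtain ⟨q, hq⟩ := IsPrincipalIdealRing.principal (I.comap (Ideal.Quotient.mk _))
  have hpn : p ^ n ∈ I.comap (Ideal.Quotient.mk (Ideal.span {p ^ n})) := by
    rw [Ideal.mem_comap, Ideal.Quotient.eq_zero_iff_mem.mpr (Ideal.mem_span_singleton_self _)]
    exact I.zero_mem
  rw [hq, Ideal.submodule_span_eq, Ideal.mem_span_singleton] at hpn
  obtain ⟨k, hk, hassoc⟩ := (dvd_prime_pow hp n).mp hpn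
  refine ⟨k, hk, ?_⟩
  rw [← Ideal.map_comap_of_surjective _ Ideal.Quotient.mk_surjective I, hq,
    Ideal.submodule_span_eq, Ideal.span_singleton_eq_span_singleton.mpr hassoc, Ideal.map_span,
    Set.image_singleton]

theorem Module.Flat.of_ker_pow_le_range_pow {n : ℕ} {M : Type*} [AddCommGroup M]
    [Module (R ⧸ Ideal.span {p ^ n}) M] (hp : Prime p)
    (h : ∀ k ≤ n, ∀ e : M, Ideal.Quotient.mk (Ideal.span {p ^ n}) (p ^ k) • e = 0 →
      ∃ f : M, Ideal.Quotient.mk (Ideal.span {p ^ n}) (p ^ (n - k)) • f = e) :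
    Module.Flat (R ⧸ Ideal.span {p ^ n}) M := by
  rw [Module.Flat.iff_rTensor_injective']
  intro I
  obtain ⟨k, hk, rfl⟩ := Ideal.exists_eq_span_pow_of_quotient_span_pow hp n I
  refine Ideal.rTensor_span_singleton_subtype_injective _ fun e he => ?_
  obtain ⟨f, rfl⟩ := h k hk e he
  refine ⟨_, f, ?_, rfl⟩
  rw [← map_mul, ← pow_add, Nat.sub_add_cancel hk, Ideal.Quotient.eq_zero_iff_mem]
  exact Ideal.mem_span_singleton_self _

end PrimePowerQuotient

section PowSMul

lemma pow_smul_eq_pow_smul_of_forall_smul_eq {A B M : Type*} [Monoid A] [Monoid B]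
    [MulAction A M] [MulAction B M] {a : A} {b : B} (h : ∀ e : M, a • e = b • e) (n : ℕ)
    (e : M) : a ^ n • e = b ^ n • e := by
  induction n generalizing e with
  | zero => simp
  | succ n ih => rw [pow_succ, pow_succ, mul_smul, mul_smul, h, ih]

variable {R M : Type*} [Monoid R] [AddMonoid M] [DistribMulAction R M] {t : R}

lemma exists_pow_succ_smul_eq_of_pow_smul_eq_zero {N : ℕ}
    (hN : ∀ e : M, t ^ N • e = 0 → ∃ f, t • f = e) {k n : ℕ} (hkn : k + n = N) {e : M}
    (he : t ^ k • e = 0) : ∃ f, t ^ (n + 1) • f = e := by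
  induction n generalizing k e with
  | zero =>
    rw [add_zero] at hkn
    subst hkn
    simpa using hN e he
  | succ n ih =>
    obtain ⟨f, rfl⟩ := ih (k := k + 1) (by omega) (by rw [pow_succ', mul_smul, he, smul_zero])
    obtain ⟨g, rfl⟩ := hN f (by rw [← hkn, pow_add, mul_smul]; exact he)
    exact ⟨g, by rw [smul_smul, ← pow_succ]⟩

lemma exists_pow_sub_smul_eq_of_pow_smul_eq_zero {m k : ℕ}
    (hm : ∀ e : M, t ^ (m - 1) • e = 0 → ∃ f, t • f = e) (hk : k ≤ m) {e : M}
    (he : t ^ k • e = 0) : ∃ f, t ^ (m - k) • f = e := by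
  obtain rfl | hkm := hk.eq_or_lt
  · exact ⟨e, by simp⟩
  · have := exists_pow_succ_smul_eq_of_pow_smul_eq_zero hm (n := m - 1 - k) (by omega) he
    rwa [show m - 1 - k + 1 = m - k by omega] at this

end PowSMul

theorem local_flatness_criterion
    (m : ℕ)
    (hcompat : ∀ e : E, (X : Polynomial K) • e = t • e)
    (htor : ∀ e : E, t^m • e = 0)
    (hb : ∀ e : E, t^(m-1) • e = 0 ↔ e ∈ LinearMap.range (LinearMap.lsmul S E t)) :
    letI := (full_tor K S t E m hcompat htor).module
    Module.Flat (Polynomial K ⧸ Ideal.span {(X : Polynomial K)^m}) E := by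
  let := (full_tor K S t E m hcompat htor).module
  have hXt := pow_smul_eq_pow_smul_of_forall_smul_eq hcompat
  have hker : ∀ e : E, t ^ (m - 1) • e = 0 → ∃ f, t • f = e := fun e he => (hb e).mp he
  refine Module.Flat.of_ker_pow_le_range_pow Polynomial.prime_X fun k hk e he => ?_
  rw [Module.IsTorsionBySet.mk_smul, hXt] at he
  obtain ⟨f, hf⟩ := exists_pow_sub_smul_eq_of_pow_smul_eq_zero hker hk he
  exact ⟨f, by rw [Module.IsTorsionBySet.mk_smul, hXt, hf]⟩
end
end
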